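/- arXiv:2507.04386 — 4 statements merged into one kernel-verified Lean document; each statement's English description precedes it below -/
import Mathlib

section
/- Let I = {i ∈ ℤ : i ≡ ε mod 2, -2m < i < 2m} and let δ = (δ_i)_{i ∈ I} with δ_{-i} = δ_i. There is a bijection Θ between the set of symmetric I-tableaux T = (c_{i,j})_{i ≥ j} (with c_{-j,-i} = c_{i,j}) of dimension vector δ (meaning Σ_{u ≥ i ≥ v} c_{u,v} = δ_i for all i) and the set of symmetric I-tableaux R = (r_{i,j})_{i ≥ j} satisfying r_{i,i} = δ_i and r_{i,j} - r_{i+2,j} - r_{i,j-2} + r_{i+2,j-2} ≥ 0 for all i ≥ j (with r_{i,j} = 0 when i ∉ I or j ∉ I), given by Θ(T)_{i,j} = Σ_{u ≥ i, j ≥ v} c_{u,v}; its inverse is c_{i,j} = r_{i,j} - r_{i+2,j} - r_{i,j-2} + r_{i+2,j-2}. -/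
/-- The index set `I = {i ∈ ℤ : i ≡ ε (mod 2), -2m < i < 2m}`. -/
noncomputable def Iset (m : ℕ) (ε : ℤ) : Finset ℤ :=
  (Finset.Ioo (-(2 * (m : ℤ))) (2 * (m : ℤ))).filter (fun i => i % 2 = ε)

/-- The box multiplicity function: `μ(i,j) = μmax` if `i + j = 0`, and `0` otherwise. -/
def boxMul (μmax : ℕ) (i j : ℤ) : ℕ := if i + j = 0 then μmax else 0

/-- The set of `I`-boxes `b(i,j,k)` with `i,j ∈ I`, `i ≥ j`, `0 ≤ k ≤ μ(i,j)`. -/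
noncomputable def Boxes (m : ℕ) (ε : ℤ) (μmax : ℕ) : Finset (ℤ × ℤ × ℕ) :=
  ((Iset m ε) ×ˢ (Iset m ε) ×ˢ Finset.range (μmax + 1)).filter
    (fun b => b.2.1 ≤ b.1 ∧ b.2.2 ≤ boxMul μmax b.1 b.2.1)

/-- The involution `τ` on `I`-boxes: `τ(b(i,j,k)) = b(-j,-i,k)` when `i + j ≠ 0`,
and `τ(b(i,-i,k)) = b(i,-i,μmax - k)` on the principal diagonal. -/
def boxτ (μmax : ℕ) (b : ℤ × ℤ × ℕ) : ℤ × ℤ × ℕ :=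
  if b.1 + b.2.1 = 0 then (b.1, b.2.1, μmax - b.2.2) else (-b.2.1, -b.1, b.2.2)

/-- The support of the box `b(i,j,k)`: `{i' ∈ I : j ≤ i' ≤ i}`. -/
noncomputable def Supp (m : ℕ) (ε : ℤ) (i j : ℤ) : Finset ℤ :=
  (Iset m ε).filter (fun x => j ≤ x ∧ x ≤ i)

/-- `h_{i'}(b) = #{j'' ∈ I : j ≤ j'' ≤ i'} - #{i'' ∈ I : i' ≤ i'' ≤ i}`. -/
noncomputable def hcoef (m : ℕ) (ε : ℤ) (i j i' : ℤ) : ℤ :=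
  (((Iset m ε).filter (fun x => j ≤ x ∧ x ≤ i')).card : ℤ) -
    (((Iset m ε).filter (fun x => i' ≤ x ∧ x ≤ i)).card : ℤ)

/-- `f_{i'}(b) = #{(i'',j'') ∈ I×I : i'' ≥ j'', i' ≤ i'' ≤ i, j < j'' ≤ i'}`. -/
noncomputable def fcoef (m : ℕ) (ε : ℤ) (i j i' : ℤ) : ℤ :=
  ((((Iset m ε) ×ˢ (Iset m ε)).filter
    (fun p => p.2 ≤ p.1 ∧ i' ≤ p.1 ∧ p.1 ≤ i ∧ j < p.2 ∧ p.2 ≤ i')).card : ℤ)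

/-- The dimension vector of a function `c` on boxes: `δ_i(c) = Σ_{b ∈ B, i ∈ Supp(b)} c(b)`. -/
noncomputable def dimvec (m : ℕ) (ε : ℤ) (μmax : ℕ) (c : ℤ × ℤ × ℕ → ℕ) (i : ℤ) : ℕ :=
  ∑ b ∈ (Boxes m ε μmax).filter (fun b => i ∈ Supp m ε b.1 b.2.1), c b

/-- The top half of the support of the box `b(i,j,k)`:
`{i' ∈ I : (i+j+2)/2 ≤ i' ≤ i}`. -/
noncomputable def SuppTop (m : ℕ) (ε : ℤ) (i j : ℤ) : Finset ℤ :=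
  (Iset m ε).filter (fun x => (i + j + 2) / 2 ≤ x ∧ x ≤ i)

/-- The rank map `Θ`: `Θ(c)_{i,j} = Σ_{u ≥ i, j ≥ v, u,v ∈ I} c_{u,v}`,
defined to be `0` outside the domain `{(i,j) : i,j ∈ I, i ≥ j}`. -/
noncomputable def Theta (m : ℕ) (ε : ℤ) (c : ℤ × ℤ → ℕ) : ℤ × ℤ → ℕ :=
  fun p =>
    if p.1 ∈ Iset m ε ∧ p.2 ∈ Iset m ε ∧ p.2 ≤ p.1 then
      ∑ q ∈ ((Iset m ε) ×ˢ (Iset m ε)).filter (fun q => p.1 ≤ q.1 ∧ q.2 ≤ p.2), c q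
    else 0

/-- The set of symmetric `I`-tableaux `(c_{i,j})_{i ≥ j}` (encoded as functions on `ℤ × ℤ`
vanishing outside the domain) with `c_{-j,-i} = c_{i,j}` and dimension vector `δ`,
i.e. `Σ_{u ≥ i ≥ v} c_{u,v} = δ_i` for all `i ∈ I`. -/
def TabSet (m : ℕ) (ε : ℤ) (δ : ℤ → ℕ) : Set (ℤ × ℤ → ℕ) :=
  {c | (∀ p : ℤ × ℤ, ¬(p.1 ∈ Iset m ε ∧ p.2 ∈ Iset m ε ∧ p.2 ≤ p.1) → c p = 0) ∧
       (∀ i j : ℤ, i ∈ Iset m ε → j ∈ Iset m ε → j ≤ i → c (-j, -i) = c (i, j)) ∧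
       (∀ i ∈ Iset m ε,
         ∑ q ∈ ((Iset m ε) ×ˢ (Iset m ε)).filter (fun q => i ≤ q.1 ∧ q.2 ≤ i), c q = δ i)}

/-- The set of symmetric `I`-tableaux `(r_{i,j})_{i ≥ j}` with `r_{i,i} = δ_i` and
`r_{i,j} - r_{i+2,j} - r_{i,j-2} + r_{i+2,j-2} ≥ 0`, with the convention `r_{i,j} = 0`
when `i ∉ I` or `j ∉ I` (built into the encoding as functions vanishing outside the domain). -/
def RSet (m : ℕ) (ε : ℤ) (δ : ℤ → ℕ) : Set (ℤ × ℤ → ℕ) :=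
  {r | (∀ p : ℤ × ℤ, ¬(p.1 ∈ Iset m ε ∧ p.2 ∈ Iset m ε ∧ p.2 ≤ p.1) → r p = 0) ∧
       (∀ i j : ℤ, i ∈ Iset m ε → j ∈ Iset m ε → j ≤ i → r (-j, -i) = r (i, j)) ∧
       (∀ i ∈ Iset m ε, r (i, i) = δ i) ∧
       (∀ i j : ℤ, i ∈ Iset m ε → j ∈ Iset m ε → j ≤ i →
         (r (i + 2, j) : ℤ) + (r (i, j - 2) : ℤ) ≤ (r (i, j) : ℤ) + (r (i + 2, j - 2) : ℤ))}

/-!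
`Θ` is a two-dimensional cumulative sum over the quadrant `u ≥ i, v ≤ j`. Since consecutive
elements of `I` differ by `2`, inclusion–exclusion splits the quadrant at `(i, j)` into the cell
`(i, j)`, the quadrants at `(i + 2, j)` and `(i, j - 2)`, minus their overlap at `(i + 2, j - 2)`;
so the second difference of `Θ(c)` is `c`. Conversely a tableau is determined by its second
differences, by downward induction on `i - j` (which is bounded on the domain). Symmetry and the
diagonal condition transfer because `Θ` commutes with `(i, j) ↦ (-j, -i)` and `Θ(c)_{i,i}` is the
`i`-th entry of the dimension vector.
-/

open Finset

section Tableaux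

variable {m : ℕ} {ε : ℤ}

abbrev IsCell (m : ℕ) (ε : ℤ) (p : ℤ × ℤ) : Prop :=
  p.1 ∈ Iset m ε ∧ p.2 ∈ Iset m ε ∧ p.2 ≤ p.1

def secondDiff (r : ℤ × ℤ → ℕ) (p : ℤ × ℤ) : ℤ :=
  r p - r (p.1 + 2, p.2) - r (p.1, p.2 - 2) + r (p.1 + 2, p.2 - 2)

noncomputable def rectSum (m : ℕ) (ε : ℤ) (c : ℤ × ℤ → ℕ) (i j : ℤ) : ℕ :=
  ∑ u ∈ (Iset m ε).filter (fun u => i ≤ u), ∑ v ∈ (Iset m ε).filter (fun v => v ≤ j), c (u, v)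

noncomputable def ThetaInv (m : ℕ) (ε : ℤ) (r : ℤ × ℤ → ℕ) (p : ℤ × ℤ) : ℕ :=
  if IsCell m ε p then (secondDiff r p).toNat else 0

lemma mem_Iset {x : ℤ} : x ∈ Iset m ε ↔ -(2 * (m : ℤ)) < x ∧ x < 2 * m ∧ x % 2 = ε := by
  simp [Iset, and_assoc]

lemma neg_mem_Iset_iff {x : ℤ} : -x ∈ Iset m ε ↔ x ∈ Iset m ε := by
  simp only [mem_Iset]; omega

lemma add_two_mem_Iset_or {i : ℤ} (hi : i ∈ Iset m ε) :
    i + 2 ∈ Iset m ε ∨ ∀ u ∈ Iset m ε, u < i + 2 := by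
  by_contra! h
  obtain ⟨hout, u, hu, hiu⟩ := h
  rw [mem_Iset] at hi hu hout
  omega

lemma sub_two_mem_Iset_or {j : ℤ} (hj : j ∈ Iset m ε) :
    j - 2 ∈ Iset m ε ∨ ∀ v ∈ Iset m ε, j - 2 < v := by
  by_contra! h
  obtain ⟨hout, v, hv, hvj⟩ := h
  rw [mem_Iset] at hj hv hout
  omega

lemma filter_Iset_le_eq_insert {i : ℤ} (hi : i ∈ Iset m ε) :
    (Iset m ε).filter (fun u => i ≤ u) = insert i ((Iset m ε).filter (fun u => i + 2 ≤ u)) := by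
  ext u
  simp only [mem_filter, mem_insert]
  constructor
  · rintro ⟨hu, hiu⟩
    refine (eq_or_ne u i).imp id fun hne => ⟨hu, ?_⟩
    rw [mem_Iset] at hi hu
    omega
  · rintro (rfl | ⟨hu, hiu⟩)
    exacts [⟨hi, le_rfl⟩, ⟨hu, by omega⟩]

lemma filter_Iset_ge_eq_insert {j : ℤ} (hj : j ∈ Iset m ε) :
    (Iset m ε).filter (fun v => v ≤ j) = insert j ((Iset m ε).filter (fun v => v ≤ j - 2)) := by
  ext v
  simp only [mem_filter, mem_insert]
  constructor
  · rintro ⟨hv, hvj⟩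
    refine (eq_or_ne v j).imp id fun hne => ⟨hv, ?_⟩
    rw [mem_Iset] at hj hv
    omega
  · rintro (rfl | ⟨hv, hvj⟩)
    exacts [⟨hj, le_rfl⟩, ⟨hv, by omega⟩]

lemma isCell_neg_swap_iff {a b : ℤ} : IsCell m ε (-b, -a) ↔ IsCell m ε (a, b) := by
  simp only [IsCell, neg_mem_Iset_iff, neg_le_neg_iff]
  tauto

lemma apply_neg_swap {f : ℤ × ℤ → ℕ} (hvan : ∀ p, ¬IsCell m ε p → f p = 0)
    (hsym : ∀ i j : ℤ, i ∈ Iset m ε → j ∈ Iset m ε → j ≤ i → f (-j, -i) = f (i, j))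
    (a b : ℤ) : f (-b, -a) = f (a, b) := by
  by_cases h : IsCell m ε (a, b)
  · exact hsym a b h.1 h.2.1 h.2.2
  · rw [hvan _ h, hvan _ (isCell_neg_swap_iff.not.mpr h)]

lemma secondDiff_neg_swap {r : ℤ × ℤ → ℕ} (hr : ∀ a b, r (-b, -a) = r (a, b)) (i j : ℤ) :
    secondDiff r (-j, -i) = secondDiff r (i, j) := by
  simp only [secondDiff]
  rw [show -j + 2 = -(j - 2) by ring, show -i - 2 = -(i + 2) by ring, hr, hr, hr, hr]
  ring

lemma Theta_apply (c : ℤ × ℤ → ℕ) (p : ℤ × ℤ) :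
    Theta m ε c p = if IsCell m ε p then rectSum m ε c p.1 p.2 else 0 := by
  simp only [Theta, rectSum, filter_product (fun u => p.1 ≤ u) (fun v => v ≤ p.2), sum_product]

lemma Theta_of_not_isCell (c : ℤ × ℤ → ℕ) {p : ℤ × ℤ} (hp : ¬IsCell m ε p) :
    Theta m ε c p = 0 := by
  rw [Theta_apply, if_neg hp]

/-- Off the domain both sides vanish, as soon as the quadrant at `(a, b)` misses `I × I`. -/
lemma Theta_eq_rectSum (c : ℤ × ℤ → ℕ) {a b : ℤ} (hba : b ≤ a)
    (ha : a ∈ Iset m ε ∨ ∀ u ∈ Iset m ε, u < a) (hb : b ∈ Iset m ε ∨ ∀ v ∈ Iset m ε, b < v) :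
    Theta m ε c (a, b) = rectSum m ε c a b := by
  rw [Theta_apply]
  split_ifs with hab
  · rfl
  refine (sum_eq_zero fun u hu => sum_eq_zero fun v hv => ?_).symm
  rw [mem_filter] at hu hv
  exfalso
  rcases ha with ha | ha
  · rcases hb with hb | hb
    · exact hab ⟨ha, hb, hba⟩
    · exact (hb v hv.1).not_ge hv.2
  · exact (ha u hu.1).not_ge hu.2

lemma rectSum_inclusion_exclusion (c : ℤ × ℤ → ℕ) {i j : ℤ} (hi : i ∈ Iset m ε)
    (hj : j ∈ Iset m ε) :
    rectSum m ε c i j + rectSum m ε c (i + 2) (j - 2)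
      = c (i, j) + rectSum m ε c (i + 2) j + rectSum m ε c i (j - 2) := by
  have hi' : i ∉ (Iset m ε).filter (fun u => i + 2 ≤ u) := by simp
  have hj' : j ∉ (Iset m ε).filter (fun v => v ≤ j - 2) := by simp
  simp only [rectSum, filter_Iset_le_eq_insert hi, filter_Iset_ge_eq_insert hj,
    sum_insert hi', sum_insert hj', sum_add_distrib]
  ring

lemma secondDiff_Theta (c : ℤ × ℤ → ℕ) {p : ℤ × ℤ} (hp : IsCell m ε p) :
    secondDiff (Theta m ε c) p = c p := by
  obtain ⟨i, j⟩ := p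
  obtain ⟨hi, hj, hji⟩ : i ∈ Iset m ε ∧ j ∈ Iset m ε ∧ j ≤ i := hp
  have key := rectSum_inclusion_exclusion c hi hj
  have hi2 := add_two_mem_Iset_or hi
  have hj2 := sub_two_mem_Iset_or hj
  dsimp only [secondDiff]
  rw [Theta_eq_rectSum c hji (.inl hi) (.inl hj),
    Theta_eq_rectSum c (by omega) hi2 (.inl hj), Theta_eq_rectSum c (by omega) (.inl hi) hj2,
    Theta_eq_rectSum c (by omega) hi2 hj2]
  omega

lemma rectSum_neg_swap {c : ℤ × ℤ → ℕ} (hc : ∀ a b, c (-b, -a) = c (a, b)) (i j : ℤ) :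
    rectSum m ε c (-j) (-i) = rectSum m ε c i j := by
  simp only [rectSum]
  rw [sum_comm]
  refine sum_nbij' (fun v => -v) (fun v => -v) ?_ ?_ (fun _ _ => neg_neg _) (fun _ _ => neg_neg _)
    fun v _ => sum_nbij' (fun u => -u) (fun u => -u) ?_ ?_ (fun _ _ => neg_neg _)
      (fun _ _ => neg_neg _) fun _ _ => (hc _ _).symm
  all_goals
    intro x hx
    simp only [mem_filter, neg_mem_Iset_iff] at hx ⊢
    exact ⟨hx.1, by omega⟩

lemma Theta_neg_swap {c : ℤ × ℤ → ℕ} (hc : ∀ a b, c (-b, -a) = c (a, b)) (i j : ℤ) :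
    Theta m ε c (-j, -i) = Theta m ε c (i, j) := by
  simp only [Theta_apply, isCell_neg_swap_iff, rectSum_neg_swap hc]

lemma eq_of_secondDiff_eq {f g : ℤ × ℤ → ℕ} (hf : ∀ p, ¬IsCell m ε p → f p = 0)
    (hg : ∀ p, ¬IsCell m ε p → g p = 0)
    (h : ∀ p, IsCell m ε p → secondDiff f p = secondDiff g p) : f = g := by
  suffices key : ∀ n : ℕ, ∀ p, IsCell m ε p → 4 * (m : ℤ) ≤ p.1 - p.2 + n → f p = g p by
    funext p
    by_cases hp : IsCell m ε p
    · exact key (4 * m) p hp (by push_cast; omega)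
    · rw [hf p hp, hg p hp]
  intro n
  induction n with
  | zero =>
    rintro ⟨i, j⟩ ⟨hi, hj, -⟩ hn
    rw [mem_Iset] at hi hj
    simp only [CharP.cast_eq_zero, add_zero] at hn
    omega
  | succ n ih =>
    have agree (q : ℤ × ℤ) (hq : 4 * (m : ℤ) ≤ q.1 - q.2 + n) : f q = g q := by
      by_cases hc : IsCell m ε q
      · exact ih q hc hq
      · rw [hf q hc, hg q hc]
    rintro ⟨i, j⟩ hp hn
    have hdiff := h _ hp
    simp only [secondDiff, Nat.cast_succ] at hdiff hn
    rw [agree (i + 2, j) (by dsimp; omega), agree (i, j - 2) (by dsimp; omega),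
      agree (i + 2, j - 2) (by dsimp; omega)] at hdiff
    omega

lemma eq_of_Theta_eq {c₁ c₂ : ℤ × ℤ → ℕ} (h₁ : ∀ p, ¬IsCell m ε p → c₁ p = 0)
    (h₂ : ∀ p, ¬IsCell m ε p → c₂ p = 0) (h : Theta m ε c₁ = Theta m ε c₂) : c₁ = c₂ := by
  funext p
  by_cases hp : IsCell m ε p
  · exact_mod_cast (secondDiff_Theta c₁ hp).symm.trans (h ▸ secondDiff_Theta c₂ hp)
  · rw [h₁ p hp, h₂ p hp]

lemma secondDiff_nonneg_of_mem_RSet {δ : ℤ → ℕ} {r : ℤ × ℤ → ℕ} (hr : r ∈ RSet m ε δ)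
    {p : ℤ × ℤ} (hp : IsCell m ε p) : 0 ≤ secondDiff r p := by
  obtain ⟨i, j⟩ := p
  have := hr.2.2.2 i j hp.1 hp.2.1 hp.2.2
  dsimp only [secondDiff]
  omega

lemma Theta_ThetaInv {δ : ℤ → ℕ} {r : ℤ × ℤ → ℕ} (hr : r ∈ RSet m ε δ) :
    Theta m ε (ThetaInv m ε r) = r := by
  refine eq_of_secondDiff_eq (fun p => Theta_of_not_isCell _) hr.1 fun p hp => ?_
  rw [secondDiff_Theta _ hp, ThetaInv, if_pos hp,
    Int.toNat_of_nonneg (secondDiff_nonneg_of_mem_RSet hr hp)]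

lemma ThetaInv_mem_TabSet {δ : ℤ → ℕ} {r : ℤ × ℤ → ℕ} (hr : r ∈ RSet m ε δ) :
    ThetaInv m ε r ∈ TabSet m ε δ := by
  have hTheta := Theta_ThetaInv hr
  obtain ⟨hvan, hsym, hdiag, -⟩ := hr
  refine ⟨fun p hp => if_neg hp, fun i j hi hj hji => ?_, fun i hi => ?_⟩
  · have hcell : IsCell m ε (i, j) := ⟨hi, hj, hji⟩
    rw [ThetaInv, ThetaInv, if_pos (isCell_neg_swap_iff.mpr hcell), if_pos hcell,
      secondDiff_neg_swap (apply_neg_swap hvan hsym)]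
  · have hii := congrFun hTheta (i, i)
    rw [Theta, if_pos ⟨hi, hi, le_rfl⟩] at hii
    exact hii.trans (hdiag i hi)

lemma Theta_mem_RSet {δ : ℤ → ℕ} {c : ℤ × ℤ → ℕ} (hc : c ∈ TabSet m ε δ) :
    Theta m ε c ∈ RSet m ε δ := by
  obtain ⟨hvan, hsym, hdim⟩ := hc
  refine ⟨fun p => Theta_of_not_isCell c, fun i j _ _ _ => Theta_neg_swap
    (apply_neg_swap hvan hsym) i j, fun i hi => ?_, fun i j hi hj hji => ?_⟩
  · rw [Theta, if_pos ⟨hi, hi, le_rfl⟩]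
    exact hdim i hi
  · have := secondDiff_Theta c (m := m) (ε := ε) (p := (i, j)) ⟨hi, hj, hji⟩
    dsimp only [secondDiff] at this
    omega

end Tableaux

theorem stmt11_general (m : ℕ) (ε : ℤ) (δ : ℤ → ℕ) :
    Set.BijOn (Theta m ε) (TabSet m ε δ) (RSet m ε δ) ∧
    ∀ c ∈ TabSet m ε δ, ∀ i j : ℤ, i ∈ Iset m ε → j ∈ Iset m ε → j ≤ i →
      (c (i, j) : ℤ) = (Theta m ε c (i, j) : ℤ) - (Theta m ε c (i + 2, j) : ℤ)
        - (Theta m ε c (i, j - 2) : ℤ) + (Theta m ε c (i + 2, j - 2) : ℤ) := by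
  refine ⟨⟨fun c => Theta_mem_RSet, ?_, ?_⟩, fun c _ i j hi hj hji =>
    (secondDiff_Theta c (p := (i, j)) ⟨hi, hj, hji⟩).symm⟩
  · rintro c₁ ⟨hvan₁, -, -⟩ c₂ ⟨hvan₂, -, -⟩ h
    exact eq_of_Theta_eq hvan₁ hvan₂ h
  · intro r hr
    exact ⟨ThetaInv m ε r, ThetaInv_mem_TabSet hr, Theta_ThetaInv hr⟩

/-- `Θ` is a bijection between the set of symmetric `I`-tableaux of dimension vector `δ`
and the set of "rank" tableaux `R` with `r_{i,i} = δ_i` and nonnegative second differences;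
its inverse is given by `c_{i,j} = r_{i,j} - r_{i+2,j} - r_{i,j-2} + r_{i+2,j-2}`. -/
theorem stmt11 (m : ℕ) (ε : ℤ) (hε : ε = 0 ∨ ε = 1) (δ : ℤ → ℕ)
    (hδ : ∀ i : ℤ, δ (-i) = δ i) :
    Set.BijOn (Theta m ε) (TabSet m ε δ) (RSet m ε δ) ∧
    ∀ c ∈ TabSet m ε δ, ∀ i j : ℤ, i ∈ Iset m ε → j ∈ Iset m ε → j ≤ i →
      (c (i, j) : ℤ) = (Theta m ε c (i, j) : ℤ) - (Theta m ε c (i + 2, j) : ℤ)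
        - (Theta m ε c (i, j - 2) : ℤ) + (Theta m ε c (i + 2, j - 2) : ℤ) :=
  stmt11_general m ε δ
end

section
/- Under the bijection Θ of the previous statement, if additionally all diagonal entries c_{i,-i} (i > 0) of T are even, then all diagonal entries r_{i,-i} (i > 0) of R = Θ(T) are even, and conversely: the parity condition on the principal diagonal is preserved in both directions. Specifically, r_{i,-i} = Σ_{u ≥ i} c_{u,-u} + 2 Σ_{u ≥ i ≥ -i ≥ v, u+v > 0} c_{u,v}. -/
/-
The entry `r_{i,-i}` sums `c` over the quadrant `u ≥ i, v ≤ -i`. Split the quadrant by the sign of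
`u + v`: the antidiagonal `u + v = 0` contributes `Σ_{u ≥ i} c_{u,-u}`, and the reflection
`(u, v) ↦ (-v, -u)` exchanges the parts `u + v < 0` and `u + v > 0`, which by the symmetry of `c`
therefore contribute equally. Hence `r_{i,-i} ≡ Σ_{u ≥ i} c_{u,-u} (mod 2)`, and these tail sums are
all even exactly when their successive differences `c_{i,-i}` are.
-/

lemma neg_mem_Iset {m : ℕ} {ε i : ℤ} (h : i ∈ Iset m ε) : -i ∈ Iset m ε := by
  simp only [Iset, Finset.mem_filter, Finset.mem_Ioo] at *
  omega

lemma sum_Iset_filter_le_eq_add {M : Type*} [AddCommMonoid M] {m : ℕ} {ε i : ℤ} (f : ℤ → M)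
    (hi : i ∈ Iset m ε) :
    ∑ u ∈ (Iset m ε).filter (i ≤ ·), f u = f i + ∑ u ∈ (Iset m ε).filter (i + 2 ≤ ·), f u := by
  have hsplit : (Iset m ε).filter (i ≤ ·) = insert i ((Iset m ε).filter (i + 2 ≤ ·)) := by
    ext u
    simp only [Iset, Finset.mem_filter, Finset.mem_Ioo, Finset.mem_insert] at hi ⊢
    omega
  rw [hsplit, Finset.sum_insert (by simp)]

lemma forall_dvd_iff_forall_dvd_sum_Iset_filter_le {m : ℕ} {ε : ℤ} (n : ℕ) (f : ℤ → ℕ) :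
    (∀ i ∈ Iset m ε, 0 < i → n ∣ f i) ↔
      ∀ i ∈ Iset m ε, 0 < i → n ∣ ∑ u ∈ (Iset m ε).filter (i ≤ ·), f u := by
  constructor
  · intro hf i _ hipos
    refine Finset.dvd_sum fun u hu => ?_
    rw [Finset.mem_filter] at hu
    exact hf u hu.1 (by omega)
  · intro htail i hi hipos
    have hnext : n ∣ ∑ u ∈ (Iset m ε).filter (i + 2 ≤ ·), f u := by
      by_cases hi2 : i + 2 ∈ Iset m ε
      · exact htail (i + 2) hi2 (by omega)
      · rw [Finset.filter_eq_empty_iff.mpr fun u hu hle => hi2 ?_, Finset.sum_empty]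
        · exact dvd_zero n
        simp only [Iset, Finset.mem_filter, Finset.mem_Ioo] at hi hu ⊢
        omega
    have := htail i hi hipos
    rwa [sum_Iset_filter_le_eq_add f hi, Nat.dvd_add_left hnext] at this

section Symmetric

variable {M : Type*} [AddCommMonoid M] {m : ℕ} {ε : ℤ} {c : ℤ × ℤ → M}

lemma sum_quadrant_antidiagonal (i : ℤ) :
    ∑ q ∈ (Iset m ε ×ˢ Iset m ε).filter (fun q => i ≤ q.1 ∧ q.2 ≤ -i ∧ q.1 + q.2 = 0), c q =
      ∑ u ∈ (Iset m ε).filter (i ≤ ·), c (u, -u) := by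
  refine Finset.sum_nbij' Prod.fst (fun u => (u, -u)) ?_ ?_ ?_ ?_ ?_
  · intro q hq
    simp only [Finset.mem_filter, Finset.mem_product] at hq ⊢
    exact ⟨hq.1.1, hq.2.1⟩
  · intro u hu
    simp only [Finset.mem_filter, Finset.mem_product] at hu ⊢
    exact ⟨⟨hu.1, neg_mem_Iset hu.1⟩, hu.2, by omega, by omega⟩
  · intro q hq
    simp only [Finset.mem_filter, Finset.mem_product] at hq
    exact Prod.ext rfl (by omega)
  · intro u _
    rfl
  · intro q hq
    simp only [Finset.mem_filter, Finset.mem_product] at hq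
    rw [show q = (q.1, -q.1) from Prod.ext rfl (by omega)]

variable (hsym : ∀ i j : ℤ, i ∈ Iset m ε → j ∈ Iset m ε → j ≤ i → c (-j, -i) = c (i, j))
include hsym

lemma sum_quadrant_neg_eq_sum_quadrant_pos {i : ℤ} (hi : 0 ≤ i) :
    ∑ q ∈ (Iset m ε ×ˢ Iset m ε).filter (fun q => i ≤ q.1 ∧ q.2 ≤ -i ∧ q.1 + q.2 < 0), c q =
      ∑ q ∈ (Iset m ε ×ˢ Iset m ε).filter (fun q => i ≤ q.1 ∧ q.2 ≤ -i ∧ 0 < q.1 + q.2),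
        c q := by
  refine Finset.sum_nbij' (fun q => (-q.2, -q.1)) (fun q => (-q.2, -q.1)) ?_ ?_ ?_ ?_ ?_
  all_goals simp only [Finset.mem_filter, Finset.mem_product, neg_neg, Prod.mk.eta, implies_true]
  · intro q hq
    exact ⟨⟨neg_mem_Iset hq.1.2, neg_mem_Iset hq.1.1⟩, by omega, by omega, by omega⟩
  · intro q hq
    exact ⟨⟨neg_mem_Iset hq.1.2, neg_mem_Iset hq.1.1⟩, by omega, by omega, by omega⟩
  · intro q hq
    exact (hsym q.1 q.2 hq.1.1 hq.1.2 (by omega)).symm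

end Symmetric

section Theta

variable {m : ℕ} {ε : ℤ} {c : ℤ × ℤ → ℕ}
  (hsym : ∀ i j : ℤ, i ∈ Iset m ε → j ∈ Iset m ε → j ≤ i → c (-j, -i) = c (i, j))
include hsym

lemma Theta_apply_neg {i : ℤ} (hi : i ∈ Iset m ε) (hpos : 0 ≤ i) :
    (Theta m ε c (i, -i) : ℤ) =
      (∑ u ∈ (Iset m ε).filter (i ≤ ·), (c (u, -u) : ℤ)) +
        2 * ∑ q ∈ (Iset m ε ×ˢ Iset m ε).filter (fun q => i ≤ q.1 ∧ q.2 ≤ -i ∧ 0 < q.1 + q.2),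
          (c q : ℤ) := by
  have hsymℤ : ∀ i j : ℤ, i ∈ Iset m ε → j ∈ Iset m ε → j ≤ i →
      (c (-j, -i) : ℤ) = c (i, j) := fun i j hi hj hji => congrArg Nat.cast (hsym i j hi hj hji)
  rw [Theta, if_pos ⟨hi, neg_mem_Iset hi, by omega⟩,
    ← sum_quadrant_antidiagonal (c := fun q => (c q : ℤ)), two_mul]
  nth_rw 2 [← sum_quadrant_neg_eq_sum_quadrant_pos hsymℤ hpos]
  push_cast
  simp only [Finset.sum_filter, ← Finset.sum_add_distrib]
  refine Finset.sum_congr rfl fun q _ => ?_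
  split_ifs <;> omega

lemma two_dvd_Theta_apply_neg_iff {i : ℤ} (hi : i ∈ Iset m ε) (hpos : 0 ≤ i) :
    2 ∣ Theta m ε c (i, -i) ↔ 2 ∣ ∑ u ∈ (Iset m ε).filter (i ≤ ·), c (u, -u) := by
  have h := Theta_apply_neg hsym hi hpos
  rw [← Nat.cast_sum] at h
  omega

end Theta

theorem stmt12_general (m : ℕ) (ε : ℤ) (δ : ℤ → ℕ) (c : ℤ × ℤ → ℕ) (hc : c ∈ TabSet m ε δ) :
    (∀ i ∈ Iset m ε, 0 < i →
      (Theta m ε c (i, -i) : ℤ) =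
        (∑ u ∈ (Iset m ε).filter (fun u => i ≤ u), (c (u, -u) : ℤ)) +
        2 * ∑ q ∈ ((Iset m ε) ×ˢ (Iset m ε)).filter
              (fun q => i ≤ q.1 ∧ q.2 ≤ -i ∧ 0 < q.1 + q.2), (c q : ℤ)) ∧
    ((∀ i ∈ Iset m ε, 0 < i → 2 ∣ c (i, -i)) ↔
      (∀ i ∈ Iset m ε, 0 < i → 2 ∣ Theta m ε c (i, -i))) := by
  obtain ⟨-, hsym, -⟩ := hc
  refine ⟨fun i hi hpos => Theta_apply_neg hsym hi hpos.le, ?_⟩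
  rw [forall_dvd_iff_forall_dvd_sum_Iset_filter_le]
  exact forall₂_congr fun i hi =>
    imp_congr_right fun hpos => (two_dvd_Theta_apply_neg_iff hsym hi hpos.le).symm

/-- For a symmetric `I`-tableau `c` of dimension vector `δ`, the diagonal entries of
`R = Θ(c)` satisfy `r_{i,-i} = Σ_{u ≥ i} c_{u,-u} + 2 Σ_{u ≥ i ≥ -i ≥ v, u+v > 0} c_{u,v}`,
and all diagonal entries `c_{i,-i}` (`i > 0`) of `c` are even if and only if all diagonal
entries `r_{i,-i}` (`i > 0`) of `Θ(c)` are even. -/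
theorem stmt12 (m : ℕ) (ε : ℤ) (hε : ε = 0 ∨ ε = 1) (δ : ℤ → ℕ)
    (hδ : ∀ i : ℤ, δ (-i) = δ i) (c : ℤ × ℤ → ℕ) (hc : c ∈ TabSet m ε δ) :
    (∀ i ∈ Iset m ε, 0 < i →
      (Theta m ε c (i, -i) : ℤ) =
        (∑ u ∈ (Iset m ε).filter (fun u => i ≤ u), (c (u, -u) : ℤ)) +
        2 * ∑ q ∈ ((Iset m ε) ×ˢ (Iset m ε)).filter
              (fun q => i ≤ q.1 ∧ q.2 ≤ -i ∧ 0 < q.1 + q.2), (c q : ℤ)) ∧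
    ((∀ i ∈ Iset m ε, 0 < i → 2 ∣ c (i, -i)) ↔
      (∀ i ∈ Iset m ε, 0 < i → 2 ∣ Theta m ε c (i, -i))) :=
  stmt12_general m ε δ c hc
end

section
/- In the setting of the previous statement (I a symmetric set of nonzero odd integers, quadratic space V of dimension 2N with the hyperbolic-type basis), two maximal isotropic subspaces L_J and L_{J'} (for maximal admissible J, J') lie in the same SO(V)-orbit if and only if #{(i,j) ∈ J : i < 0} ≡ #{(i,j) ∈ J' : i < 0} (mod 2). -/
/-- The index set `S = {(i,j) : i ∈ I, 1 ≤ j ≤ δ_i}` of the basis `{u_{i,j}}` of `V`. -/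
def Sset (I : Finset ℤ) (δ : ℤ → ℕ) : Finset (ℤ × ℕ) :=
  I.biUnion (fun i => (Finset.Icc 1 (δ i)).image (fun j => (i, j)))

/-- The symmetric bilinear form on `V = (↥S → k)` with
`⟨u_{i,r}, u_{j,s}⟩ = 1` if `i + j = 0` and `r = s`, and `0` otherwise. -/
def Bform (k : Type*) [Field k] (I : Finset ℤ) (δ : ℤ → ℕ)
    (u v : {x // x ∈ Sset I δ} → k) : k :=
  ∑ p : {x // x ∈ Sset I δ}, ∑ q : {x // x ∈ Sset I δ},
    (if (p : ℤ × ℕ).1 + (q : ℤ × ℕ).1 = 0 ∧ (p : ℤ × ℕ).2 = (q : ℤ × ℕ).2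
      then (1 : k) else 0) * u p * v q

/-- `J ⊆ S` is admissible if `(i,j), (i',j) ∈ J` implies `i + i' ≠ 0`. -/
def Admissible (I : Finset ℤ) (δ : ℤ → ℕ) (J : Finset (ℤ × ℕ)) : Prop :=
  J ⊆ Sset I δ ∧ ∀ p ∈ J, ∀ q ∈ J, p.2 = q.2 → p.1 + q.1 ≠ 0

/-- The subspace `L_J` of `V` spanned by the basis vectors `u_{i,j}` with `(i,j) ∈ J`. -/
def LJ (k : Type*) [Field k] (I : Finset ℤ) (δ : ℤ → ℕ) (J : Finset (ℤ × ℕ)) :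
    Submodule k ({x // x ∈ Sset I δ} → k) :=
  Submodule.span k
    {u | ∃ p : {x // x ∈ Sset I δ}, (p : ℤ × ℕ) ∈ J ∧ u = Pi.single p (1 : k)}

/-!
Write `σ (i, j) = (-i, j)`. Then `⟨u, v⟩ = ∑ₚ u p * v (σ p)`, and, since `0 ∉ I`, a maximal
admissible `J` is exactly a transversal of the free involution `σ` on `S`, so `L_J` is a
coordinate Lagrangian. Swapping `p ↔ σ p` for all `p ∈ J \ J'` is an isometry carrying `L_J`
onto `L_{J'}`, of determinant `(-1) ^ #(J \ J')`. An isometry stabilising a coordinate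
Lagrangian `L_A` is block triangular, and after reindexing the complement of `A` by `σ` its
diagonal blocks `X`, `Y` satisfy `Xᵀ Y = 1`; so its determinant is `1`. As `2 ≠ 0`, `L_J` and
`L_{J'}` are thus `SO(V)`-conjugate iff `#(J \ J')` is even. Finally `σ` maps `J \ J'` onto
`J' \ J` and flips the sign of `i`, whence
`#{i < 0 in J} + #{i < 0 in J'} ≡ #(J \ J') (mod 2)`.
-/

open Finset Function Matrix

section Involution

variable {α : Type*} [DecidableEq α] {σ : α → α}

-- The product of the transpositions `(p, σ p)`, `p ∈ D`, when `D` and `σ '' D` are disjoint.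
def pairSwap (hσ : Involutive σ) (D : Finset α) : Equiv.Perm α :=
  Involutive.toPerm (fun p => if p ∈ D ∨ σ p ∈ D then σ p else p) fun p => by
    by_cases h : p ∈ D ∨ σ p ∈ D
    · simp only [if_pos h, hσ p, if_pos h.symm]
    · simp only [if_neg h]

theorem pairSwap_apply (hσ : Involutive σ) (D : Finset α) (p : α) :
    pairSwap hσ D p = if p ∈ D ∨ σ p ∈ D then σ p else p := rfl

theorem pairSwap_involutive (hσ : Involutive σ) (D : Finset α) :
    Involutive (pairSwap hσ D) :=
  Involutive.toPerm_involutive _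

theorem pairSwap_comm (hσ : Involutive σ) (D : Finset α) (p : α) :
    pairSwap hσ D (σ p) = σ (pairSwap hσ D p) := by
  simp only [pairSwap_apply, hσ p, or_comm]
  split_ifs <;> simp only [hσ p]

theorem pairSwap_insert (hσ : Involutive σ) {D : Finset α} {a : α} (ha : a ∉ D)
    (hσa : σ a ∉ insert a D) :
    pairSwap hσ (insert a D) = Equiv.swap a (σ a) * pairSwap hσ D := by
  ext p
  simp only [Equiv.Perm.mul_apply, pairSwap_apply, mem_insert, Equiv.swap_apply_def]
  simp only [mem_insert, not_or] at hσa
  have := hσ a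
  have := hσ p
  split_ifs <;> grind

theorem sign_pairSwap [Fintype α] (hσ : Involutive σ) (hfix : ∀ p, σ p ≠ p) (D : Finset α)
    (hD : ∀ p ∈ D, σ p ∉ D) : Equiv.Perm.sign (pairSwap hσ D) = (-1) ^ #D := by
  induction D using Finset.induction_on with
  | empty =>
    rw [show pairSwap hσ ∅ = 1 from Equiv.ext fun p => by simp [pairSwap_apply]]
    simp
  | @insert a D ha ih =>
    rw [pairSwap_insert hσ ha (hD a (mem_insert_self a D)), map_mul,
      Equiv.Perm.sign_swap (hfix a).symm,
      ih fun p hp hσp => hD p (mem_insert_of_mem hp) (mem_insert_of_mem hσp),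
      card_insert_of_notMem ha, pow_succ, mul_comm]

theorem pairSwap_sdiff_mem_iff (hσ : Involutive σ) {A A' : Finset α}
    (hA : ∀ p, p ∈ A ↔ σ p ∉ A) (hA' : ∀ p, p ∈ A' ↔ σ p ∉ A') (p : α) :
    pairSwap hσ (A \ A') p ∈ A' ↔ p ∈ A := by
  have hσA : σ p ∈ A ↔ p ∉ A := by rw [hA (σ p), hσ p]
  have hσA' : σ p ∈ A' ↔ p ∉ A' := by rw [hA' (σ p), hσ p]
  simp only [pairSwap_apply, mem_sdiff, hσA, hσA']
  split_ifs <;> tauto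

theorem card_filter_add_card_filter_of_transversal (hσ : Involutive σ) {A A' : Finset α}
    (hA : ∀ p, p ∈ A ↔ σ p ∉ A) (hA' : ∀ p, p ∈ A' ↔ σ p ∉ A') {P : α → Prop}
    [DecidablePred P] (hP : ∀ p, P (σ p) ↔ ¬ P p) :
    #(A.filter P) + #(A'.filter P) = #(A \ A') + 2 * #((A ∩ A').filter P) := by
  have hsplit : ∀ B B' : Finset α,
      #(B.filter P) = #((B \ B').filter P) + #((B ∩ B').filter P) := fun B B' => by
    rw [← card_union_of_disjoint (disjoint_filter_filter (disjoint_sdiff_inter B B')),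
      ← filter_union, sdiff_union_inter]
  have hswap : #((A' \ A).filter P) = #((A \ A').filter (¬ P ·)) := by
    refine card_nbij' σ σ (fun p hp => ?_) (fun p hp => ?_) (fun p _ => hσ p) fun p _ => hσ p
    · simp only [mem_coe, mem_filter, mem_sdiff] at hp ⊢
      rw [hP, hA, hA', hσ p]
      tauto
    · simp only [mem_coe, mem_filter, mem_sdiff] at hp ⊢
      rw [hP, hA (σ p), hA' (σ p), hσ p]
      tauto
  rw [hsplit A A', hsplit A' A, hswap, inter_comm A' A,
    ← card_filter_add_card_filter_not (s := A \ A') P]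
  ring

end Involution

section Transversal

variable {α : Type*} [Fintype α] {σ : α → α} {k : Type*} [Field k]

theorem Pi.map_funCongrLeft_spanSubset (π : Equiv.Perm α) {s t : Set α}
    (hπ : ∀ p, π p ∈ s ↔ p ∈ t) :
    (Pi.spanSubset k s).map (LinearEquiv.funCongrLeft k k π).toLinearMap =
      Pi.spanSubset k t := by
  ext v
  rw [Submodule.mem_map_equiv, LinearEquiv.funCongrLeft_symm, Pi.mem_spanSubset_iff,
    Pi.mem_spanSubset_iff, ← π.forall_congr_right]
  simp [hπ, LinearEquiv.funCongrLeft_apply, LinearMap.funLeft_apply]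

theorem dotProduct_funCongrLeft {π : Equiv.Perm α} (hπ : ∀ p, π (σ p) = σ (π p))
    (u v : α → k) :
    LinearEquiv.funCongrLeft k k π u ⬝ᵥ (LinearEquiv.funCongrLeft k k π v ∘ σ) =
      u ⬝ᵥ (v ∘ σ) := by
  simp only [dotProduct, Function.comp_apply, LinearEquiv.funCongrLeft_apply,
    LinearMap.funLeft_apply, hπ]
  exact Equiv.sum_comp π fun p => u p * v (σ p)

variable [DecidableEq α]

theorem LinearMap.det_funLeft_perm (π : Equiv.Perm α) :
    LinearMap.det (LinearMap.funLeft k k π) = Equiv.Perm.sign π := by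
  rw [← LinearMap.det_toMatrix', ← det_permutation]
  congr 1
  ext p q
  simp [LinearMap.toMatrix'_apply, Equiv.Perm.permMatrix, PEquiv.toMatrix_apply, Pi.single_apply]

theorem Matrix.det_eq_one_of_orthogonal_of_blockTriangular {s : α → Prop} [DecidablePred s]
    {M : Matrix α α k} (hσ : Involutive σ) (hs : ∀ p, s p ↔ ¬ s (σ p))
    (hM : ∀ p, ¬ s p → ∀ q, s q → M p q = 0)
    (horth : ∀ q, s q → ∀ q', s q' → ∑ p, M p q * M (σ p) (σ q') = if q = q' then 1 else 0) :
    M.det = 1 := by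
  let e : {p // s p} ≃ {p // ¬ s p} := (hσ.toPerm σ).subtypeEquiv hs
  rw [twoBlockTriangular_det M s hM, ← det_submatrix_equiv_self e, ← det_transpose, ← det_mul]
  refine (congrArg det ?_).trans det_one
  ext q q'
  have h := horth q q.2 q' q'.2
  rw [← Fintype.sum_subtype_add_sum_subtype s,
    Fintype.sum_eq_zero (fun p : {p // ¬ s p} => _) fun p => by rw [hM p p.2 q q.2, zero_mul],
    add_zero] at h
  simp only [mul_apply, one_apply, Subtype.ext_iff]
  exact h

theorem LinearMap.det_eq_one_of_isometry_of_map_le {A : Finset α} (hσ : Involutive σ)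
    (hA : ∀ p, p ∈ A ↔ σ p ∉ A) (f : (α → k) →ₗ[k] α → k)
    (hf : ∀ u v, f u ⬝ᵥ (f v ∘ σ) = u ⬝ᵥ (v ∘ σ))
    (hfA : (Pi.spanSubset k (A : Set α)).map f ≤ Pi.spanSubset k A) :
    LinearMap.det f = 1 := by
  rw [← LinearMap.det_toMatrix']
  refine det_eq_one_of_orthogonal_of_blockTriangular (s := (· ∈ A)) hσ hA (fun p hp q hq => ?_)
    fun q _ q' _ => ?_
  · rw [LinearMap.toMatrix'_apply]
    refine Pi.mem_spanSubset_iff.mp (hfA (Submodule.mem_map_of_mem ?_)) p hp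
    exact Pi.mem_spanSubset_iff.mpr fun r hr =>
      Pi.single_eq_of_ne (fun h => hr (by rw [h]; exact hq)) 1
  · have h := hf (Pi.single q 1) (Pi.single (σ q') 1)
    simp only [single_dotProduct, one_mul, Function.comp_apply, Pi.single_apply,
      hσ.injective.eq_iff] at h
    simpa [LinearMap.toMatrix'_apply, dotProduct] using h

theorem exists_isometry_det_eq_one_map_spanSubset_iff (h2 : (2 : k) ≠ 0) (hσ : Involutive σ)
    (hfix : ∀ p, σ p ≠ p) {A A' : Finset α} (hA : ∀ p, p ∈ A ↔ σ p ∉ A)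
    (hA' : ∀ p, p ∈ A' ↔ σ p ∉ A') :
    (∃ g : (α → k) ≃ₗ[k] (α → k), (∀ u v, g u ⬝ᵥ (g v ∘ σ) = u ⬝ᵥ (v ∘ σ)) ∧
      LinearMap.det g.toLinearMap = 1 ∧
      (Pi.spanSubset k (A : Set α)).map g.toLinearMap = Pi.spanSubset k A') ↔
    Even #(A \ A') := by
  set π := pairSwap hσ (A \ A')
  have hπA : ∀ p, π p ∈ A' ↔ p ∈ A := pairSwap_sdiff_mem_iff hσ hA hA'
  have hπA' : ∀ p, π p ∈ A ↔ p ∈ A' := fun p => by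
    rw [← hπA (π p), pairSwap_involutive hσ _ p]
  set gπ := LinearEquiv.funCongrLeft k k π
  have hgπ : ∀ u v, gπ u ⬝ᵥ (gπ v ∘ σ) = u ⬝ᵥ (v ∘ σ) :=
    dotProduct_funCongrLeft (pairSwap_comm hσ _)
  have hdet : LinearMap.det gπ.toLinearMap = (-1) ^ #(A \ A') := by
    change LinearMap.det (LinearMap.funLeft k k π) = _
    rw [LinearMap.det_funLeft_perm, sign_pairSwap hσ hfix _ fun p hp hσp => ?_]
    · push_cast; rfl
    · simp only [mem_sdiff] at hp hσp
      exact (hA p).mp hp.1 hσp.1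
  constructor
  · rintro ⟨g, hg, hdetg, hgA⟩
    have hstab : LinearMap.det (g.trans gπ).toLinearMap = 1 := by
      refine LinearMap.det_eq_one_of_isometry_of_map_le hσ hA _ (fun u v => ?_) ?_
      · simp only [LinearEquiv.coe_coe, LinearEquiv.trans_apply, hgπ, hg]
      · rw [LinearEquiv.coe_trans, Submodule.map_comp, hgA,
          Pi.map_funCongrLeft_spanSubset (s := A') (t := A) π hπA]
    rw [LinearEquiv.coe_trans, LinearMap.det_comp, hdetg, mul_one, hdet,
      neg_one_pow_eq_one_iff_even fun h => h2 (by linear_combination -h)] at hstab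
    exact hstab
  · intro heven
    refine ⟨gπ, hgπ, by rw [hdet, heven.neg_one_pow], ?_⟩
    exact Pi.map_funCongrLeft_spanSubset π hπA'

end Transversal

theorem card_filter_subtype_of_subset {β : Type*} [DecidableEq β] {S s : Finset β}
    (hs : s ⊆ S) {P : β → Prop} [DecidablePred P] :
    #((s.subtype (· ∈ S)).filter fun p : S => P p) = #(s.filter P) := by
  have : (s.subtype (· ∈ S)).filter (fun p : S => P p) = (s.filter P).subtype (· ∈ S) := by
    ext; simp [and_comm]
  rw [this, card_subtype, filter_true_of_mem fun p hp => hs (mem_filter.mp hp).1]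

section Concrete

variable {I : Finset ℤ} {δ : ℤ → ℕ}

def negFst (p : ℤ × ℕ) : ℤ × ℕ := (-p.1, p.2)

theorem mem_Sset {p : ℤ × ℕ} : p ∈ Sset I δ ↔ p.1 ∈ I ∧ 1 ≤ p.2 ∧ p.2 ≤ δ p.1 := by
  simp only [Sset, mem_biUnion, mem_image, mem_Icc]
  constructor
  · rintro ⟨i, hi, j, hj, rfl⟩
    exact ⟨hi, hj⟩
  · rintro ⟨hi, hj⟩
    exact ⟨p.1, hi, p.2, hj, rfl⟩

theorem negFst_mem_Sset (hIsym : ∀ i ∈ I, -i ∈ I) (hδ : ∀ i, δ (-i) = δ i) {p : ℤ × ℕ}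
    (hp : p ∈ Sset I δ) : negFst p ∈ Sset I δ := by
  rw [mem_Sset] at hp ⊢
  exact ⟨hIsym _ hp.1, hp.2.1, (hδ p.1).symm ▸ hp.2.2⟩

theorem Bform_eq_dotProduct (k : Type*) [Field k] {σ : Sset I δ → Sset I δ}
    (hσ : ∀ p, (σ p : ℤ × ℕ) = negFst p) (u v : Sset I δ → k) :
    Bform k I δ u v = u ⬝ᵥ (v ∘ σ) := by
  have hpair : ∀ p q : Sset I δ,
      ((p : ℤ × ℕ).1 + (q : ℤ × ℕ).1 = 0 ∧ (p : ℤ × ℕ).2 = (q : ℤ × ℕ).2) ↔ q = σ p := by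
    intro p q
    rw [Subtype.ext_iff, hσ, Prod.ext_iff, negFst]
    omega
  simp only [Bform, hpair, ite_mul, one_mul, zero_mul, sum_ite_eq', mem_univ, if_true]
  rfl

theorem LJ_eq_spanSubset (k : Type*) [Field k] (J : Finset (ℤ × ℕ)) :
    LJ k I δ J = Pi.spanSubset k ↑(J.subtype (· ∈ Sset I δ)) := by
  rw [LJ, Pi.spanSubset]
  congr 1
  ext u
  simp [eq_comm]

theorem Admissible.mem_iff_negFst_notMem (hI0 : (0 : ℤ) ∉ I) {J : Finset (ℤ × ℕ)}
    (hJ : Admissible I δ J)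
    (hmax : ∀ J'' : Finset (ℤ × ℕ), Admissible I δ J'' → J ⊆ J'' → J'' = J)
    {p : ℤ × ℕ} (hp : p ∈ Sset I δ) : p ∈ J ↔ negFst p ∉ J := by
  refine ⟨fun hpJ hnJ => hJ.2 p hpJ _ hnJ rfl (by simp [negFst]), fun hnJ => ?_⟩
  by_contra hpJ
  have hp0 : p.1 ≠ 0 := fun h => hI0 (h ▸ (mem_Sset.mp hp).1)
  have hnot : ∀ r ∈ J, p.2 = r.2 → p.1 + r.1 ≠ 0 := fun r hr h2 h1 =>
    hnJ (by convert hr using 1; ext <;> simp [negFst] <;> omega)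
  have hins : Admissible I δ (insert p J) := by
    refine ⟨insert_subset hp hJ.1, ?_⟩
    simp only [mem_insert]
    rintro q (rfl | hq) r (rfl | hr) h2
    · omega
    · exact hnot r hr h2
    · rw [add_comm]; exact hnot q hq h2.symm
    · exact hJ.2 q hq r hr h2
  exact hpJ (hmax _ hins (subset_insert p J) ▸ mem_insert_self p J)

theorem Admissible.mem_subtype_iff (hI0 : (0 : ℤ) ∉ I) {σ : Sset I δ → Sset I δ}
    (hσ : ∀ p, (σ p : ℤ × ℕ) = negFst p) {J : Finset (ℤ × ℕ)} (hJ : Admissible I δ J)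
    (hmax : ∀ J'' : Finset (ℤ × ℕ), Admissible I δ J'' → J ⊆ J'' → J'' = J) (p : Sset I δ) :
    p ∈ J.subtype (· ∈ Sset I δ) ↔ σ p ∉ J.subtype (· ∈ Sset I δ) := by
  simp only [mem_subtype, hσ]
  exact Admissible.mem_iff_negFst_notMem hI0 hJ hmax p.2

end Concrete

theorem stmt14_general (k : Type*) [Field k] (h2 : (2 : k) ≠ 0)
    (I : Finset ℤ) (δ : ℤ → ℕ)
    (hIodd : ∀ i ∈ I, i % 2 = 1) (hIsym : ∀ i ∈ I, -i ∈ I)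
    (hδ : ∀ i : ℤ, δ (-i) = δ i)
    (J J' : Finset (ℤ × ℕ)) (hJ : Admissible I δ J)
    (hmax : ∀ J'' : Finset (ℤ × ℕ), Admissible I δ J'' → J ⊆ J'' → J'' = J)
    (hJ' : Admissible I δ J')
    (hmax' : ∀ J'' : Finset (ℤ × ℕ), Admissible I δ J'' → J' ⊆ J'' → J'' = J') :
    (∃ g : ({x // x ∈ Sset I δ} → k) ≃ₗ[k] ({x // x ∈ Sset I δ} → k),
      (∀ u v, Bform k I δ (g u) (g v) = Bform k I δ u v) ∧
      LinearMap.det g.toLinearMap = 1 ∧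
      Submodule.map g.toLinearMap (LJ k I δ J) = LJ k I δ J') ↔
    (J.filter (fun p => p.1 < 0)).card % 2 = (J'.filter (fun p => p.1 < 0)).card % 2 := by
  have hI0 : (0 : ℤ) ∉ I := fun h => by simpa using hIodd 0 h
  let σ : Sset I δ → Sset I δ := Subtype.map negFst fun _ => negFst_mem_Sset hIsym hδ
  have hσ : ∀ p, (σ p : ℤ × ℕ) = negFst p := fun _ => rfl
  have hσinv : Involutive σ := fun p => Subtype.ext (by simp [hσ, negFst])
  have hp0 : ∀ p : Sset I δ, (p : ℤ × ℕ).1 ≠ 0 := fun p h => hI0 (h ▸ (mem_Sset.mp p.2).1)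
  have hσfix : ∀ p, σ p ≠ p := fun p h => by
    have := congrArg (fun q : Sset I δ => (q : ℤ × ℕ).1) h
    simp only [hσ, negFst] at this
    exact hp0 p (by omega)
  have hA := hJ.mem_subtype_iff hI0 hσ hmax
  have hA' := hJ'.mem_subtype_iff hI0 hσ hmax'
  have hcount := card_filter_add_card_filter_of_transversal hσinv hA hA'
    (P := fun p => (p : ℤ × ℕ).1 < 0) fun p => by
      have := hp0 p
      simp only [hσ, negFst]
      omega
  rw [card_filter_subtype_of_subset (P := fun p : ℤ × ℕ => p.1 < 0) hJ.1,
    card_filter_subtype_of_subset (P := fun p : ℤ × ℕ => p.1 < 0) hJ'.1] at hcount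
  simp_rw [Bform_eq_dotProduct k hσ, LJ_eq_spanSubset]
  rw [exists_isometry_det_eq_one_map_spanSubset_iff h2 hσinv hσfix hA hA', Nat.even_iff]
  omega

/-- For `I` a finite symmetric set of nonzero odd integers and `δ` symmetric, and `J, J'`
maximal admissible subsets, the maximal isotropic subspaces `L_J` and `L_{J'}` lie in the
same `SO(V)`-orbit if and only if
`#{(i,j) ∈ J : i < 0} ≡ #{(i,j) ∈ J' : i < 0} (mod 2)`. -/
theorem stmt14 (k : Type*) [Field k] [IsAlgClosed k] (h2 : (2 : k) ≠ 0)
    (I : Finset ℤ) (δ : ℤ → ℕ)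
    (hIodd : ∀ i ∈ I, i % 2 = 1) (hIsym : ∀ i ∈ I, -i ∈ I)
    (hδ : ∀ i : ℤ, δ (-i) = δ i)
    (J J' : Finset (ℤ × ℕ)) (hJ : Admissible I δ J)
    (hmax : ∀ J'' : Finset (ℤ × ℕ), Admissible I δ J'' → J ⊆ J'' → J'' = J)
    (hJ' : Admissible I δ J')
    (hmax' : ∀ J'' : Finset (ℤ × ℕ), Admissible I δ J'' → J' ⊆ J'' → J'' = J') :
    (∃ g : ({x // x ∈ Sset I δ} → k) ≃ₗ[k] ({x // x ∈ Sset I δ} → k),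
      (∀ u v, Bform k I δ (g u) (g v) = Bform k I δ u v) ∧
      LinearMap.det g.toLinearMap = 1 ∧
      Submodule.map g.toLinearMap (LJ k I δ J) = LJ k I δ J') ↔
    (J.filter (fun p => p.1 < 0)).card % 2 = (J'.filter (fun p => p.1 < 0)).card % 2 :=
  stmt14_general k h2 I δ hIodd hIsym hδ J J' hJ hmax hJ' hmax'
end

section
/- Let E be a nilpotent endomorphism of a finite-dimensional vector space V whose Jordan type is a totally even partition 2^{a(2)} 4^{a(4)} 6^{a(6)}⋯ (all parts even). Then the subspace L = E(ker E²) + E²(ker E⁴) + ⋯ + E^k(ker E^{2k}) + ⋯ satisfies 2 dim L = dim V. Moreover, if V carries a nondegenerate symmetric bilinear form ⟨,⟩ with ⟨E u, v⟩ + ⟨u, E v⟩ = 0 for all u,v, then L is a maximal isotropic subspace of V. -/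
/-!
Write `r m = rank E^m`. Since `E^n (ker E^(a+n)) = ker E^a ⊓ range E^n`, rank–nullity for `E^a`
on `range E^n` gives this subspace dimension `r n - r (a+n)`. Adding the summands of `L` one at a
time, the summand for `j+1` meets the earlier ones exactly in `ker E^j ⊓ range E^(j+1)`, so the
dimension grows by `r (2j+1) - r (2j+2)`. The absence of odd parts,
`r (2j) + r (2j+2) = 2 r (2j+1)`, then keeps the partial sums `L_j` at `2 dim L_j + r (2j) = dim V`,
and `r (2j) = 0` for large `j`.

Isotropy: skew-adjointness gives `B (E^m x) (E^n y) = ± B x (E^(m+n) y)`, which vanishes when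
`E^(2n) y = 0` and `n ≤ m`; the case `m ≤ n` is the same argument for the flipped form.
-/

open LinearMap Submodule Module

namespace Module.End

variable {k V : Type*} [Field k] [AddCommGroup V] [Module k V] (E : Module.End k V)

lemma ker_pow_mono : Monotone fun n : ℕ => ker (E ^ n) := fun m n hmn => by
  simp only [← pow_sub_mul_pow E hmn, mul_eq_comp]
  exact ker_le_ker_comp _ _

lemma range_pow_anti : Antitone fun n : ℕ => range (E ^ n) := fun m n hmn => by
  simp only [← pow_mul_pow_sub E hmn, mul_eq_comp]
  exact range_comp_le_range _ _

lemma map_pow_ker_pow_add (a b : ℕ) :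
    map (E ^ b) (ker (E ^ (a + b))) = ker (E ^ a) ⊓ range (E ^ b) := by
  rw [pow_add, mul_eq_comp, ker_comp, map_comap_eq, inf_comm]

lemma finrank_ker_pow_inf_range_pow_add [FiniteDimensional k V] (a b : ℕ) :
    finrank k ↥(ker (E ^ a) ⊓ range (E ^ b)) + finrank k (range (E ^ (a + b))) =
      finrank k (range (E ^ b)) := by
  have h := finrank_range_add_finrank_ker ((E ^ a).domRestrict (range (E ^ b)))
  rwa [range_domRestrict, ← range_comp, ← mul_eq_comp, ← pow_add, ker_domRestrict,
    ← finrank_map_subtype_eq, map_comap_subtype, inf_comm, add_comm] at h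

def kerRangeSup (j : ℕ) : Submodule k V := ⨆ n ≤ j, ker (E ^ n) ⊓ range (E ^ n)

lemma kerRangeSup_zero : kerRangeSup E 0 = ⊥ := by
  simp [kerRangeSup, one_eq_id]

lemma kerRangeSup_succ (j : ℕ) :
    kerRangeSup E (j + 1) = kerRangeSup E j ⊔ (ker (E ^ (j + 1)) ⊓ range (E ^ (j + 1))) :=
  Nat.iSup_le_succ _ j

lemma kerRangeSup_le_ker_pow (j : ℕ) : kerRangeSup E j ≤ ker (E ^ j) :=
  iSup₂_le fun _ hn => inf_le_left.trans (ker_pow_mono E hn)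

lemma kerRangeSup_inf_ker_pow_succ_inf_range_pow_succ (j : ℕ) :
    kerRangeSup E j ⊓ (ker (E ^ (j + 1)) ⊓ range (E ^ (j + 1))) =
      ker (E ^ j) ⊓ range (E ^ (j + 1)) := by
  apply le_antisymm
  · exact le_inf (inf_le_left.trans (kerRangeSup_le_ker_pow E j))
      (inf_le_right.trans inf_le_right)
  · refine le_inf ?_ (inf_le_inf_right _ (ker_pow_mono E j.le_succ))
    calc ker (E ^ j) ⊓ range (E ^ (j + 1)) ≤ ker (E ^ j) ⊓ range (E ^ j) :=
          inf_le_inf_left _ (range_pow_anti E j.le_succ)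
      _ ≤ kerRangeSup E j := le_iSup₂_of_le j le_rfl le_rfl

lemma two_mul_finrank_kerRangeSup_add [FiniteDimensional k V]
    (heven : ∀ a : ℕ, Odd a →
      finrank k (range (E ^ (a - 1))) + finrank k (range (E ^ (a + 1))) =
        2 * finrank k (range (E ^ a))) (j : ℕ) :
    2 * finrank k (kerRangeSup E j) + finrank k (range (E ^ (2 * j))) = finrank k V := by
  induction j with
  | zero =>
    rw [kerRangeSup_zero, mul_zero, pow_zero, one_eq_id, range_id, finrank_top, finrank_bot,
      mul_zero, zero_add]
  | succ j ih =>
    have hsup := finrank_sup_add_finrank_inf_eq (kerRangeSup E j)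
      (ker (E ^ (j + 1)) ⊓ range (E ^ (j + 1)))
    rw [← kerRangeSup_succ, kerRangeSup_inf_ker_pow_succ_inf_range_pow_succ] at hsup
    have hnew := finrank_ker_pow_inf_range_pow_add E (j + 1) (j + 1)
    have hold := finrank_ker_pow_inf_range_pow_add E j (j + 1)
    have hodd := heven (2 * j + 1) (odd_two_mul_add_one j)
    rw [show j + 1 + (j + 1) = 2 * (j + 1) by ring] at hnew
    rw [show j + (j + 1) = 2 * j + 1 by ring] at hold
    rw [Nat.add_sub_cancel, show 2 * j + 1 + 1 = 2 * (j + 1) by ring] at hodd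
    omega

lemma iSup_ker_pow_inf_range_pow_eq_kerRangeSup {N : ℕ} (hN : E ^ N = 0) :
    ⨆ n, ker (E ^ n) ⊓ range (E ^ n) = kerRangeSup E N := by
  refine le_antisymm (iSup_le fun n => ?_) (iSup₂_le fun n _ => le_iSup_of_le n le_rfl)
  rcases le_total n N with hn | hn
  · exact le_iSup₂_of_le n hn le_rfl
  · simp [pow_eq_zero_of_le hn hN]

lemma bilin_pow_apply_left (B : LinearMap.BilinForm k V)
    (hB : ∀ u v : V, B (E u) v + B u (E v) = 0) (j : ℕ) (u v : V) :
    B ((E ^ j) u) v = (-1) ^ j * B u ((E ^ j) v) := by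
  induction j generalizing v with
  | zero => simp
  | succ j ih =>
    have hcomm : (E ^ j) (E v) = (E ^ (j + 1)) v := by rw [pow_succ, mul_apply]
    rw [pow_succ', mul_apply, eq_neg_of_add_eq_zero_left (hB _ v), ih, hcomm, pow_succ' E j]
    ring

lemma bilin_pow_apply_pow_eq_zero_of_le (B : LinearMap.BilinForm k V)
    (hB : ∀ u v : V, B (E u) v + B u (E v) = 0) {m n : ℕ} (hnm : n ≤ m) {x y : V}
    (hy : (E ^ (2 * n)) y = 0) : B ((E ^ m) x) ((E ^ n) y) = 0 := by
  rw [bilin_pow_apply_left E B hB, ← mul_apply, ← pow_add,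
    ← pow_sub_mul_pow E (show 2 * n ≤ m + n by omega), mul_apply, hy, map_zero, map_zero,
    mul_zero]

lemma bilin_pow_apply_pow_eq_zero (B : LinearMap.BilinForm k V)
    (hB : ∀ u v : V, B (E u) v + B u (E v) = 0) (m n : ℕ) {x y : V}
    (hx : (E ^ (2 * m)) x = 0) (hy : (E ^ (2 * n)) y = 0) : B ((E ^ m) x) ((E ^ n) y) = 0 := by
  rcases le_total n m with hnm | hmn
  · exact bilin_pow_apply_pow_eq_zero_of_le E B hB hnm hy
  · have hB' : ∀ u v : V, B.flip (E u) v + B.flip u (E v) = 0 := fun u v => by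
      simpa [add_comm] using hB v u
    exact bilin_pow_apply_pow_eq_zero_of_le E B.flip hB' hmn hx

lemma bilin_eq_zero_of_mem_iSup_map_pow_ker_pow_two_mul (B : LinearMap.BilinForm k V)
    (hB : ∀ u v : V, B (E u) v + B u (E v) = 0) {u v : V}
    (hu : u ∈ ⨆ n, map (E ^ n) (ker (E ^ (2 * n))))
    (hv : v ∈ ⨆ n, map (E ^ n) (ker (E ^ (2 * n)))) : B u v = 0 := by
  have horth : ∀ n y, (E ^ (2 * n)) y = 0 → B u ((E ^ n) y) = 0 := fun n y hy => by
    refine (iSup_le fun m => ?_ : _ ≤ ker (B.flip ((E ^ n) y))) hu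
    rintro _ ⟨x, hx, rfl⟩
    exact bilin_pow_apply_pow_eq_zero E B hB m n hx hy
  refine (iSup_le fun n => ?_ : _ ≤ ker (B u)) hv
  rintro _ ⟨y, hy, rfl⟩
  exact horth n y hy

end Module.End

open Module.End

/-- Let `E` be a nilpotent endomorphism of a finite-dimensional vector space `V` whose
Jordan type is a totally even partition (no odd parts: for each odd `a`, the multiplicity
`rank E^{a-1} - 2 rank E^a + rank E^{a+1}` of the part `a` vanishes). Then the subspace
`L = Σ_n E^n(ker E^{2n})` satisfies `2 dim L = dim V`; moreover, for every nondegenerate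
symmetric bilinear form `B` with `B(Eu,v) + B(u,Ev) = 0`, `L` is isotropic (hence a
maximal isotropic subspace of `V`). -/
theorem stmt15 (k : Type*) [Field k] (V : Type*) [AddCommGroup V] [Module k V]
    [FiniteDimensional k V] (E : V →ₗ[k] V) (hE : IsNilpotent E)
    (heven : ∀ a : ℕ, Odd a →
      Module.finrank k (LinearMap.range (E ^ (a - 1))) +
          Module.finrank k (LinearMap.range (E ^ (a + 1))) =
        2 * Module.finrank k (LinearMap.range (E ^ a))) :
    2 * Module.finrank k
        (⨆ n : ℕ, Submodule.map (E ^ n) (LinearMap.ker (E ^ (2 * n))) : Submodule k V) =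
      Module.finrank k V ∧
    ∀ B : LinearMap.BilinForm k V,
      (∀ u v : V, B u v = B v u) →
      (∀ v : V, (∀ u : V, B u v = 0) → v = 0) →
      (∀ u v : V, B (E u) v + B u (E v) = 0) →
      ∀ u ∈ (⨆ n : ℕ, Submodule.map (E ^ n) (LinearMap.ker (E ^ (2 * n))) : Submodule k V),
        ∀ v ∈ (⨆ n : ℕ, Submodule.map (E ^ n) (LinearMap.ker (E ^ (2 * n))) : Submodule k V),
          B u v = 0 := by
  obtain ⟨N, hN⟩ := hE
  have hL : (⨆ n : ℕ, map (E ^ n) (ker (E ^ (2 * n)))) = kerRangeSup E N := by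
    simp only [two_mul, map_pow_ker_pow_add]
    exact iSup_ker_pow_inf_range_pow_eq_kerRangeSup E hN
  refine ⟨?_, fun B _ _ hB u hu v hv =>
    bilin_eq_zero_of_mem_iSup_map_pow_ker_pow_two_mul E B hB hu hv⟩
  have h := two_mul_finrank_kerRangeSup_add E heven N
  rwa [pow_eq_zero_of_le (by omega) hN, range_zero, finrank_bot, add_zero, ← hL] at h
end
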